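/- arXiv:1405.2164 — 2 statements merged into one kernel-verified Lean document; each statement's English description precedes it below -/
import Mathlib

section
/- Let n ≥ 0 and let F : B^{n+1} → ℝ^{n+2} be the parametrization of the upper hyperboloid F(x) = ((1 + ‖x‖²)/(1 − ‖x‖²), 2x/(1 − ‖x‖²)). Then F is differentiable on the open unit ball, and for every x with ‖x‖ < 1 and all v, w ∈ ℝ^{n+1}, the pullback of the Lorentzian bilinear form satisfies b(DF(x)v, DF(x)w) = 4⟨v, w⟩/(1 − ‖x‖²)², where DF(x) is the Fréchet derivative of F at x. (Thus the Lorentzian metric induces on the hyperboloid, identified with B^{n+1}, exactly the Poincaré metric g₊ = 4(dx₁² + ⋯ + dx_{n+1}²)/(1 − ‖x‖²)².) -/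
open scoped RealInnerProductSpace

/-- The Lorentzian symmetric bilinear form `b(ζ, ξ) = -ζ₀ξ₀ + ⟨ζ', ξ'⟩` on `ℝ × ℝ^{n+1}`. -/
noncomputable def Lorb (n : ℕ) (ζ ξ : ℝ × EuclideanSpace ℝ (Fin (n + 1))) : ℝ :=
  -(ζ.1 * ξ.1) + ⟪ζ.2, ξ.2⟫

/-- The parametrization `F` of the upper hyperboloid by the unit ball. -/
noncomputable def hypF (n : ℕ) (x : EuclideanSpace ℝ (Fin (n + 1))) :
    ℝ × EuclideanSpace ℝ (Fin (n + 1)) :=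
  ((1 + ‖x‖ ^ 2) / (1 - ‖x‖ ^ 2), ((2 : ℝ) / (1 - ‖x‖ ^ 2)) • x)


/-! Write `c = 2 / (1 - ‖x‖²)`, so that `F = (c - 1, c x)` and `Dc = c² ⟪x, ·⟫`; hence
`DF(x) v = (c² ⟪x, v⟫, c² ⟪x, v⟫ x + c v)`. Expanding `b(DF v, DF w)`, the terms in
`c⁴ ⟪x, v⟫ ⟪x, w⟫ (‖x‖² - 1) = -2 c³ ⟪x, v⟫ ⟪x, w⟫` cancel the two cross terms, leaving `c² ⟪v, w⟫`. -/

section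

variable {E : Type*} [NormedAddCommGroup E] [InnerProductSpace ℝ E]

theorem hasDerivAt_two_div_one_sub {t : ℝ} (ht : t ≠ 1) :
    HasDerivAt (fun s : ℝ => 2 / (1 - s)) (2 / (1 - t) ^ 2) t := by
  have hd : 1 - t ≠ 0 := sub_ne_zero.2 ht.symm
  refine ((hasDerivAt_const t (2 : ℝ)).div
    ((hasDerivAt_const t 1).sub (hasDerivAt_id t)) hd).congr_deriv ?_
  simp

theorem hasDerivAt_one_add_div_one_sub {t : ℝ} (ht : t ≠ 1) :
    HasDerivAt (fun s : ℝ => (1 + s) / (1 - s)) (2 / (1 - t) ^ 2) t := by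
  have hd : 1 - t ≠ 0 := sub_ne_zero.2 ht.symm
  refine (((hasDerivAt_const t 1).add (hasDerivAt_id t)).div
    ((hasDerivAt_const t 1).sub (hasDerivAt_id t)) hd).congr_deriv ?_
  simp only [Pi.add_apply, Pi.sub_apply, id_eq]
  ring

theorem HasDerivAt.hasFDerivAt_comp_norm_sq {g : ℝ → ℝ} {g' : ℝ} {x : E}
    (hg : HasDerivAt g g' (‖x‖ ^ 2)) :
    HasFDerivAt (fun y : E => g (‖y‖ ^ 2)) ((2 * g') • innerSL ℝ x) x := by
  refine (hg.comp_hasFDerivAt x (hasStrictFDerivAt_norm_sq x).hasFDerivAt).congr_fderiv ?_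
  ext v
  simp only [smul_apply, coe_innerSL_apply, nsmul_eq_mul, smul_eq_mul]
  ring

theorem hasFDerivAt_hyperboloid {x : E} (hx : ‖x‖ ^ 2 ≠ 1) :
    HasFDerivAt (fun y : E => ((1 + ‖y‖ ^ 2) / (1 - ‖y‖ ^ 2), (2 / (1 - ‖y‖ ^ 2)) • y))
      (((2 / (1 - ‖x‖ ^ 2)) ^ 2 • innerSL ℝ x).prod
        (((2 / (1 - ‖x‖ ^ 2)) ^ 2 • innerSL ℝ x).smulRight x +
          (2 / (1 - ‖x‖ ^ 2)) • ContinuousLinearMap.id ℝ E)) x := by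
  have hcoeff : 2 * (2 / (1 - ‖x‖ ^ 2) ^ 2) = (2 / (1 - ‖x‖ ^ 2)) ^ 2 := by
    rw [div_pow]; ring
  have hfst := (hasDerivAt_one_add_div_one_sub hx).hasFDerivAt_comp_norm_sq
  have hfactor := (hasDerivAt_two_div_one_sub hx).hasFDerivAt_comp_norm_sq
  rw [hcoeff] at hfst hfactor
  refine hfst.prodMk ?_
  rw [add_comm]
  exact hfactor.smul (hasFDerivAt_id x)

theorem lorentz_hyperboloid_tangent {x : E} {c : ℝ} (hc : c * (1 - ‖x‖ ^ 2) = 2) (v w : E) :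
    -(c ^ 2 * ⟪x, v⟫ * (c ^ 2 * ⟪x, w⟫)) +
        ⟪(c ^ 2 * ⟪x, v⟫) • x + c • v, (c ^ 2 * ⟪x, w⟫) • x + c • w⟫ =
      c ^ 2 * ⟪v, w⟫ := by
  simp only [inner_add_left, inner_add_right, real_inner_smul_left, real_inner_smul_right,
    real_inner_self_eq_norm_sq, real_inner_comm x v]
  linear_combination -c ^ 3 * ⟪x, v⟫ * ⟪x, w⟫ * hc

end

/-- The pullback by `F` of the Lorentzian metric to the unit ball is the Poincaré metric
`g₊ = 4⟨·,·⟩/(1 - ‖x‖²)²`. -/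
theorem hyperboloid_induces_poincare_metric (n : ℕ)
    (x : EuclideanSpace ℝ (Fin (n + 1))) (hx : ‖x‖ < 1) :
    DifferentiableAt ℝ (hypF n) x ∧
    ∀ v w : EuclideanSpace ℝ (Fin (n + 1)),
      Lorb n (fderiv ℝ (hypF n) x v) (fderiv ℝ (hypF n) x w) =
        4 * ⟪v, w⟫ / (1 - ‖x‖ ^ 2) ^ 2 := by
  have hx₁ : ‖x‖ ^ 2 < 1 := by nlinarith [norm_nonneg x]
  have hF : HasFDerivAt (hypF n) _ x := hasFDerivAt_hyperboloid hx₁.ne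
  refine ⟨hF.differentiableAt, fun v w => ?_⟩
  have hc : 2 / (1 - ‖x‖ ^ 2) * (1 - ‖x‖ ^ 2) = 2 := div_mul_cancel₀ _ (by linarith)
  rw [hF.fderiv]
  calc _ = _ := lorentz_hyperboloid_tangent hc v w
    _ = _ := by rw [div_pow]; ring
end

section
/- Let n ≥ 1, let g : ℝ^{n+2} → ℝ^{n+2} be a linear map with B(gζ) = B(ζ) for all ζ, and let φ_g : S^n → S^n be the induced map φ_g(x) = (g(1, x))'/(g(1, x))₀. Then φ_g is differentiable as a map of the sphere, and for every x ∈ S^n and all tangent vectors v, w ∈ ℝ^{n+1} with ⟨v, x⟩ = ⟨w, x⟩ = 0, the tangential derivative Dφ_g(x) (the Fréchet derivative of φ_g within S^n at x) satisfies ⟨Dφ_g(x)v, Dφ_g(x)w⟩ = ((g(1, x))₀)^{−2}·⟨v, w⟩. (Thus G = O(n+1,1) acts on S^n by conformal maps of the round metric, with conformal factor ((g(1,x))₀)^{−1}.) -/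
open scoped RealInnerProductSpace
open Set ContinuousLinearMap

/-!
A point `x` of the sphere is the null line through `(1, x)`, and `φ_g` is the action of `g` on
null lines read in the affine chart `ζ ↦ ζ₀⁻¹ ζ'`. The differential of that chart at `ζ` sends `η`
to `ζ₀⁻¹ (η - (η₀ / ζ₀) ζ)'`, the spatial part of a vector with vanishing time component, whose
Euclidean and Lorentzian squared lengths therefore agree. For `ζ = g(1, x)` and `η = g(0, v)` that
vector is `g((0, v) - c (1, x))`, and since `g` is a Lorentz isometry while `(1, x)` is null and
Lorentz-orthogonal to `(0, v)` and `(0, w)`, the Lorentz pairing of the vectors for `v` and `w` is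
`⟪v, w⟫`. Tangent vectors `v ⊥ x` lie in the tangent cone of the sphere (along great circles), so
the derivative within the sphere is the restriction of the full derivative.
-/

/-- The standard Lorentzian quadratic form `B(ζ) = -ζ₀² + ‖ζ'‖²` on `ℝ^{n+2} = ℝ × ℝ^{n+1}`. -/
noncomputable def LorB (n : ℕ) (ζ : ℝ × EuclideanSpace ℝ (Fin (n + 1))) : ℝ :=
  -ζ.1 ^ 2 + ‖ζ.2‖ ^ 2

section Sphere

variable {E : Type*} [NormedAddCommGroup E] [InnerProductSpace ℝ E]

theorem mem_tangentConeAt_sphere_of_inner_eq_zero {x v : E} (hx : ‖x‖ = 1) (hv : ⟪v, x⟫ = 0) :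
    v ∈ tangentConeAt ℝ {y : E | ‖y‖ = 1} x := by
  rcases eq_or_ne v 0 with rfl | hv₀
  · exact zero_mem_tangentConeAt (subset_closure hx)
  set u := ‖v‖⁻¹ • v
  have hu : ‖u‖ = 1 := norm_smul_inv_norm hv₀
  have hxu : ⟪x, u⟫ = 0 := by simp [u, real_inner_smul_right, inner_eq_zero_symm.1 hv]
  set c : ℝ → E := fun t => Real.cos t • x + Real.sin t • u
  have hc : HasDerivAt c u 0 := by
    simpa using
      ((Real.hasDerivAt_cos 0).smul_const x).fun_add ((Real.hasDerivAt_sin 0).smul_const u)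
  have hc_sphere : c '' univ ⊆ {y : E | ‖y‖ = 1} := by
    rintro _ ⟨t, -, rfl⟩
    have : ‖c t‖ ^ 2 = 1 := by
      simp only [c, norm_add_sq_real, norm_smul, real_inner_smul_left, real_inner_smul_right,
        hxu, hx, hu, Real.norm_eq_abs, mul_pow, sq_abs]
      nlinarith [Real.sin_sq_add_cos_sq t]
    exact (pow_eq_one_iff_of_nonneg (norm_nonneg _) two_ne_zero).1 this
  have := hc.hasFDerivAt.hasFDerivWithinAt.mapsTo_tangent_cone
    (by simp : ‖v‖ ∈ tangentConeAt ℝ univ (0 : ℝ))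
  simpa [c, u, smul_smul, hv₀] using tangentConeAt_mono hc_sphere this

end Sphere

section Dehomogenize

variable {F : Type*} [NormedAddCommGroup F] [NormedSpace ℝ F]

noncomputable def dehomogenize (ζ : ℝ × F) : F := ζ.1⁻¹ • ζ.2

noncomputable def dehomogenizeFDeriv (ζ : ℝ × F) : ℝ × F →L[ℝ] F :=
  ζ.1⁻¹ • (snd ℝ ℝ F - (fst ℝ ℝ F).smulRight (ζ.1⁻¹ • ζ.2))

theorem dehomogenizeFDeriv_apply (ζ η : ℝ × F) :
    dehomogenizeFDeriv ζ η = ζ.1⁻¹ • (η - (η.1 / ζ.1) • ζ).2 := by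
  simp [dehomogenizeFDeriv, smul_smul, div_eq_mul_inv]

theorem hasFDerivAt_dehomogenize {ζ : ℝ × F} (hζ : ζ.1 ≠ 0) :
    HasFDerivAt dehomogenize (dehomogenizeFDeriv ζ) ζ := by
  have h : HasFDerivAt dehomogenize
      (ζ.1⁻¹ • snd ℝ ℝ F + (-(ζ.1 ^ 2)⁻¹ • fst ℝ ℝ F).smulRight ζ.2) ζ :=
    ((hasDerivAt_inv hζ).comp_hasFDerivAt ζ hasFDerivAt_fst).smul hasFDerivAt_snd
  refine h.congr_fderiv (ContinuousLinearMap.ext fun η => ?_)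
  rw [dehomogenizeFDeriv_apply]
  simp [smul_smul, sub_eq_add_neg, div_eq_mul_inv]
  ring_nf

end Dehomogenize

section Lorentz

variable {E : Type*} [NormedAddCommGroup E] [InnerProductSpace ℝ E]

def lorentzInner (ζ η : ℝ × E) : ℝ := -(ζ.1 * η.1) + ⟪ζ.2, η.2⟫

theorem lorentzInner_comm (ζ η : ℝ × E) : lorentzInner ζ η = lorentzInner η ζ := by
  simp only [lorentzInner, mul_comm, real_inner_comm]

theorem lorentzInner_add_left (ζ ζ' η : ℝ × E) :
    lorentzInner (ζ + ζ') η = lorentzInner ζ η + lorentzInner ζ' η := by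
  simp only [lorentzInner, Prod.fst_add, Prod.snd_add, inner_add_left]
  ring

theorem lorentzInner_map_of_map_self {g : ℝ × E →ₗ[ℝ] ℝ × E}
    (hg : ∀ ζ, lorentzInner (g ζ) (g ζ) = lorentzInner ζ ζ) (ζ η : ℝ × E) :
    lorentzInner (g ζ) (g η) = lorentzInner ζ η := by
  have h := hg (ζ + η)
  simp only [map_add, lorentzInner_add_left, lorentzInner_comm _ (_ + _)] at h
  simp only [lorentzInner_comm (g η), lorentzInner_comm η, hg] at h
  linarith

theorem eq_zero_of_forall_lorentzInner_eq_zero {ζ : ℝ × E} (h : ∀ η, lorentzInner ζ η = 0) :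
    ζ = 0 := by
  -- pairing with the time reflection of `ζ` gives the Euclidean norm
  have h' := h (-ζ.1, ζ.2)
  simp only [lorentzInner, mul_neg, neg_neg, real_inner_self_eq_norm_sq] at h'
  have h1 : ζ.1 = 0 := by nlinarith [sq_nonneg ζ.1, sq_nonneg ‖ζ.2‖]
  have h2 : ζ.2 = 0 := by
    rw [← norm_eq_zero]; nlinarith [sq_nonneg ζ.1, sq_nonneg ‖ζ.2‖, norm_nonneg ζ.2]
  exact Prod.ext h1 h2

theorem injective_of_lorentzInner_map {g : ℝ × E →ₗ[ℝ] ℝ × E}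
    (hg : ∀ ζ η, lorentzInner (g ζ) (g η) = lorentzInner ζ η) : Function.Injective g := by
  refine (injective_iff_map_eq_zero g).2 fun ζ hζ => eq_zero_of_forall_lorentzInner_eq_zero ?_
  intro η
  rw [← hg, hζ]
  simp [lorentzInner]

theorem fst_ne_zero_of_lorentzInner_self_eq_zero {ζ : ℝ × E} (hζ : ζ ≠ 0)
    (h : lorentzInner ζ ζ = 0) : ζ.1 ≠ 0 := by
  intro h1
  simp only [lorentzInner, h1, mul_zero, neg_zero, zero_add, inner_self_eq_zero] at h
  exact hζ (Prod.ext h1 h)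

theorem lorentzInner_eq_inner_of_fst_eq_zero {ζ : ℝ × E} (hζ : ζ.1 = 0) (η : ℝ × E) :
    lorentzInner ζ η = ⟪ζ.2, η.2⟫ := by
  simp [lorentzInner, hζ]

theorem lorentzInner_one_self_eq_zero {x : E} (hx : ‖x‖ = 1) :
    lorentzInner (1, x) (1, x) = 0 := by
  simp [lorentzInner, hx]

theorem lorentzInner_sub_smul_one {x v w : E} (hx : ‖x‖ = 1) (hv : ⟪v, x⟫ = 0)
    (hw : ⟪w, x⟫ = 0) (a b : ℝ) :
    lorentzInner ((0, v) - a • (1, x)) ((0, w) - b • (1, x)) = ⟪v, w⟫ := by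
  simp [lorentzInner, inner_sub_left, inner_sub_right, real_inner_smul_left,
    real_inner_smul_right, hx, hv, inner_eq_zero_symm.1 hw]
  ring

theorem lorB_eq_lorentzInner {n : ℕ} (ζ : ℝ × EuclideanSpace ℝ (Fin (n + 1))) :
    LorB n ζ = lorentzInner ζ ζ := by
  simp [LorB, lorentzInner, sq]

theorem inner_dehomogenizeFDeriv {ζ : ℝ × E} (hζ : ζ.1 ≠ 0) (η η' : ℝ × E) :
    ⟪dehomogenizeFDeriv ζ η, dehomogenizeFDeriv ζ η'⟫ =
      (ζ.1 ^ 2)⁻¹ * lorentzInner (η - (η.1 / ζ.1) • ζ) (η' - (η'.1 / ζ.1) • ζ) := by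
  have hfst : (η - (η.1 / ζ.1) • ζ).1 = 0 := by simp [hζ]
  rw [lorentzInner_eq_inner_of_fst_eq_zero hfst, dehomogenizeFDeriv_apply,
    dehomogenizeFDeriv_apply, real_inner_smul_left, real_inner_smul_right]
  ring

end Lorentz

theorem lorentz_transform_conformal_on_sphere_general (n : ℕ)
    (g : (ℝ × EuclideanSpace ℝ (Fin (n + 1))) →ₗ[ℝ] (ℝ × EuclideanSpace ℝ (Fin (n + 1))))
    (hg : ∀ ζ, LorB n (g ζ) = LorB n ζ)
    (φ : EuclideanSpace ℝ (Fin (n + 1)) → EuclideanSpace ℝ (Fin (n + 1)))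
    (hφ : ∀ x, φ x = ((g ((1 : ℝ), x)).1)⁻¹ • (g ((1 : ℝ), x)).2) :
    ∀ x : EuclideanSpace ℝ (Fin (n + 1)), ‖x‖ = 1 →
      DifferentiableWithinAt ℝ φ {y | ‖y‖ = 1} x ∧
      ∀ v w : EuclideanSpace ℝ (Fin (n + 1)), ⟪v, x⟫ = 0 → ⟪w, x⟫ = 0 →
        ⟪fderivWithin ℝ φ {y | ‖y‖ = 1} x v, fderivWithin ℝ φ {y | ‖y‖ = 1} x w⟫ =
          (((g ((1 : ℝ), x)).1) ^ 2)⁻¹ * ⟪v, w⟫ := by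
  intro x hx
  have hQ : ∀ ζ η, lorentzInner (g ζ) (g η) = lorentzInner ζ η :=
    lorentzInner_map_of_map_self fun ζ => by simpa only [lorB_eq_lorentzInner] using hg ζ
  have hα : (g (1, x)).1 ≠ 0 :=
    fst_ne_zero_of_lorentzInner_self_eq_zero
      ((map_ne_zero_iff g (injective_of_lorentzInner_map hQ)).2 (by simp))
      (by rw [hQ, lorentzInner_one_self_eq_zero hx])
  have hφ' : HasFDerivAt φ ((dehomogenizeFDeriv (g (1, x))).comp
      (g.toContinuousLinearMap.comp (inr ℝ ℝ _))) x := by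
    rw [funext hφ]
    exact (hasFDerivAt_dehomogenize hα).comp x
      (g.toContinuousLinearMap.hasFDerivAt.comp x (hasFDerivAt_prodMk_right 1 x))
  have hφ_diff := hφ'.differentiableAt.differentiableWithinAt (s := {y | ‖y‖ = 1})
  refine ⟨hφ_diff, fun v w hv hw => ?_⟩
  have hD := hφ_diff.hasFDerivWithinAt.unique_on hφ'.hasFDerivWithinAt
  rw [hD (mem_tangentConeAt_sphere_of_inner_eq_zero hx hv),
    hD (mem_tangentConeAt_sphere_of_inner_eq_zero hx hw)]
  simp only [coe_comp, Function.comp_apply, inr_apply, LinearMap.coe_toContinuousLinearMap']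
  rw [inner_dehomogenizeFDeriv hα, ← map_smul, ← map_sub, ← map_smul, ← map_sub, hQ,
    lorentzInner_sub_smul_one hx hv hw]

/-- The induced map of the sphere `φ_g(x) = (g(1,x))'/(g(1,x))₀` is a conformal map of the
round metric, with conformal factor `((g(1,x))₀)⁻¹`. -/
theorem lorentz_transform_conformal_on_sphere (n : ℕ) (hn : 1 ≤ n)
    (g : (ℝ × EuclideanSpace ℝ (Fin (n + 1))) →ₗ[ℝ] (ℝ × EuclideanSpace ℝ (Fin (n + 1))))
    (hg : ∀ ζ, LorB n (g ζ) = LorB n ζ)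
    (φ : EuclideanSpace ℝ (Fin (n + 1)) → EuclideanSpace ℝ (Fin (n + 1)))
    (hφ : ∀ x, φ x = ((g ((1 : ℝ), x)).1)⁻¹ • (g ((1 : ℝ), x)).2) :
    ∀ x : EuclideanSpace ℝ (Fin (n + 1)), ‖x‖ = 1 →
      DifferentiableWithinAt ℝ φ {y | ‖y‖ = 1} x ∧
      ∀ v w : EuclideanSpace ℝ (Fin (n + 1)), ⟪v, x⟫ = 0 → ⟪w, x⟫ = 0 →
        ⟪fderivWithin ℝ φ {y | ‖y‖ = 1} x v, fderivWithin ℝ φ {y | ‖y‖ = 1} x w⟫ =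
          (((g ((1 : ℝ), x)).1) ^ 2)⁻¹ * ⟪v, w⟫ :=
  lorentz_transform_conformal_on_sphere_general n g hg φ hφ
end
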